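/- Fix integers k ≥ 1, m ≥ 1 and 1 ≤ i' ≤ k. Let t = (m+1, i' − 1/2, 1) ∈ ℝ³. For all 1 ≤ i ≤ k and 1 ≤ j ≤ m, the point t dominates p_{i,j} = (j, i, −(k+2)j − i) coordinatewise if and only if i < i'; and t does not dominate any point b_j = (j, k+1, −(k+2)j + 1). -/

import Mathlib

/-- `Dominates p q` means that `q` dominates `p` coordinatewise in `ℝ³`. -/
def Dominates (p q : ℝ × ℝ × ℝ) : Prop :=
  p.1 ≤ q.1 ∧ p.2.1 ≤ q.2.1 ∧ p.2.2 ≤ q.2.2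

theorem dominates_iff_snd_fst_le {p q : ℝ × ℝ × ℝ} (h₁ : p.1 ≤ q.1) (h₃ : p.2.2 ≤ q.2.2) :
    Dominates p q ↔ p.2.1 ≤ q.2.1 := by
  simp [Dominates, h₁, h₃]

theorem not_dominates_of_snd_fst_lt {p q : ℝ × ℝ × ℝ} (h : q.2.1 < p.2.1) :
    ¬ Dominates p q :=
  fun hd => hd.2.1.not_gt h

theorem Int.cast_le_sub_half_iff_lt {K : Type*} [Field K] [LinearOrder K] [IsStrictOrderedRing K]
    {i n : ℤ} : (i : K) ≤ n - 1 / 2 ↔ i < n := by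
  constructor
  · intro h
    exact_mod_cast (by linarith : (i : K) < n)
  · intro h
    have : (i : K) + 1 ≤ n := by exact_mod_cast h
    linarith

theorem query_point_domination_general (k m i' : ℤ) (hi'k : i' ≤ k) :
    ∀ i j : ℤ, 1 ≤ i → i ≤ k → 1 ≤ j → j ≤ m →
      ((Dominates ((j:ℝ), (i:ℝ), -((k:ℝ)+2)*(j:ℝ) - (i:ℝ))
          ((m:ℝ)+1, (i':ℝ) - 1/2, 1) ↔ i < i') ∧
       ¬ Dominates ((j:ℝ), (k:ℝ)+1, -((k:ℝ)+2)*(j:ℝ) + 1)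
          ((m:ℝ)+1, (i':ℝ) - 1/2, 1)) := by
  intro i j hi1 hik hj1 hjm
  have hi1 : (1 : ℝ) ≤ i := by exact_mod_cast hi1
  have hik : (i : ℝ) ≤ k := by exact_mod_cast hik
  have hj1 : (1 : ℝ) ≤ j := by exact_mod_cast hj1
  have hjm : (j : ℝ) ≤ m := by exact_mod_cast hjm
  have hi'k : (i' : ℝ) ≤ k := by exact_mod_cast hi'k
  have hfst : (j : ℝ) ≤ m + 1 := by linarith
  have hthird : -((k : ℝ) + 2) * j - i ≤ 1 := by
    linarith [mul_nonneg (by linarith : (0 : ℝ) ≤ k + 2) (by linarith : (0 : ℝ) ≤ j)]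
  refine ⟨?_, not_dominates_of_snd_fst_lt (by dsimp only; linarith)⟩
  rw [dominates_iff_snd_fst_le hfst hthird]
  exact Int.cast_le_sub_half_iff_lt

theorem query_point_domination (k m i' : ℤ) (hk : 1 ≤ k) (hm : 1 ≤ m)
    (hi'1 : 1 ≤ i') (hi'k : i' ≤ k) :
    ∀ i j : ℤ, 1 ≤ i → i ≤ k → 1 ≤ j → j ≤ m →
      ((Dominates ((j:ℝ), (i:ℝ), -((k:ℝ)+2)*(j:ℝ) - (i:ℝ))
          ((m:ℝ)+1, (i':ℝ) - 1/2, 1) ↔ i < i') ∧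
       ¬ Dominates ((j:ℝ), (k:ℝ)+1, -((k:ℝ)+2)*(j:ℝ) + 1)
          ((m:ℝ)+1, (i':ℝ) - 1/2, 1)) :=
  query_point_domination_general k m i' hi'k
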